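/- arXiv:2603.25888 — 4 statements merged into one kernel-verified Lean document; each statement's English description precedes it below -/
import Mathlib

section
/- Let 0 < T* ≤ 1, θ ∈ (0,1), C₁* ≠ 0, θ* > 0, C₂* > 0, and let w, w₁ : [0,T*] → ℝ be continuous with w(t) − w(0) = C₁* t^θ / Γ(1+θ) + w₁(t) for all t ∈ [0,T*], and |t^{−θ} w₁(t)| ≤ C₂* t^{θ*} for all t ∈ (0,T*]. Then for any ε*, ε₃* ∈ (0,1), the estimates |Γ(1+θ) w₁(t) / (t^θ C₁*)| ≤ ε* and |θ − ln|w(t)−w(0)| / ln t| ≤ ε₃* hold for every t with 0 < t < min{T*, (|C₁*| Γ(1+x*))^{2/ε₃*}, (Γ(1+x*)/|C₁*|)^{2/ε₃*}, (1−ε*)^{2/ε₃*}, (|C₁*| ε* / C₂*)^{1/θ*}}. -/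
open Set

/-- The minimum value of the Euler Gamma function on `(0, ∞)`,
i.e. `Γ(1 + x*)` with `x* ≈ 0.4616`. -/
noncomputable def GammaMin : ℝ := sInf (Real.Gamma '' Set.Ioi (0 : ℝ))

lemma gamma_ge_one_of_two_le {x : ℝ} (hx : 2 ≤ x) : 1 ≤ Real.Gamma x := by
  rcases eq_or_lt_of_le hx with h | h
  · rw [← h, Real.Gamma_two]
  · have hs := Real.convexOn_Gamma.slope_mono_adjacent (x := 1) (y := 2) (z := x)
      (mem_Ioi.mpr one_pos) (mem_Ioi.mpr (by linarith)) one_lt_two h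
    rw [Real.Gamma_one, Real.Gamma_two] at hs
    have h0 : (0:ℝ) ≤ (Real.Gamma x - 1) / (x - 2) := by
      have : ((1:ℝ) - 1) / (2 - 1) = 0 := by norm_num
      linarith [hs, this.symm ▸ hs]
    have hx2 : (0:ℝ) < x - 2 := by linarith
    have := mul_nonneg h0 hx2.le
    rw [div_mul_cancel₀ _ hx2.ne'] at this
    linarith

lemma gamma_ge_sixth {x : ℝ} (hx : 0 < x) : 1/6 ≤ Real.Gamma x := by
  rcases le_or_gt 2 x with h | h
  · linarith [gamma_ge_one_of_two_le h]
  · have hΓpos : 0 < Real.Gamma x := Real.Gamma_pos_of_pos hx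
    have h1 : Real.Gamma (x + 1) = x * Real.Gamma x := Real.Gamma_add_one hx.ne'
    have h2 : Real.Gamma (x + 1 + 1) = (x + 1) * Real.Gamma (x + 1) :=
      Real.Gamma_add_one (by linarith)
    have h3 : 1 ≤ Real.Gamma (x + 1 + 1) := gamma_ge_one_of_two_le (by linarith)
    rw [h2, h1] at h3
    have h6 : 0 < 6 - x*(x+1) := by nlinarith
    nlinarith [mul_pos hΓpos h6]

lemma gammaMin_bddBelow : (1/6 : ℝ) ∈ lowerBounds (Real.Gamma '' Set.Ioi (0 : ℝ)) := by
  rintro _ ⟨x, hx, rfl⟩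
  exact gamma_ge_sixth hx

lemma gammaMin_pos : 0 < GammaMin := by
  have h : (1/6 : ℝ) ≤ GammaMin :=
    le_csInf ((Set.nonempty_Ioi (a := (0:ℝ))).image Real.Gamma) gammaMin_bddBelow
  linarith

lemma gammaMin_le {x : ℝ} (hx : 0 < x) : GammaMin ≤ Real.Gamma x :=
  csInf_le ⟨1/6, gammaMin_bddBelow⟩ ⟨x, mem_Ioi.mpr hx, rfl⟩

set_option maxHeartbeats 1000000 in
theorem stmt_3 (Ts θ C₁ θs C₂ : ℝ) (w w₁ : ℝ → ℝ)
    (hTs : 0 < Ts ∧ Ts ≤ 1) (hθ : θ ∈ Set.Ioo (0:ℝ) 1) (hC₁ : C₁ ≠ 0)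
    (hθs : 0 < θs) (hC₂ : 0 < C₂)
    (hw : ContinuousOn w (Set.Icc 0 Ts)) (hw₁ : ContinuousOn w₁ (Set.Icc 0 Ts))
    (hrep : ∀ t ∈ Set.Icc (0:ℝ) Ts,
      w t - w 0 = C₁ * t ^ θ / Real.Gamma (1 + θ) + w₁ t)
    (hbd : ∀ t ∈ Set.Ioc (0:ℝ) Ts, |t ^ (-θ) * w₁ t| ≤ C₂ * t ^ θs) :
    ∀ εs ∈ Set.Ioo (0:ℝ) 1, ∀ ε₃ ∈ Set.Ioo (0:ℝ) 1,
      ∀ t : ℝ, 0 < t →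
        t < min Ts (min ((|C₁| * GammaMin) ^ (2 / ε₃))
              (min ((GammaMin / |C₁|) ^ (2 / ε₃))
                (min ((1 - εs) ^ (2 / ε₃)) ((|C₁| * εs / C₂) ^ (1 / θs))))) →
        |Real.Gamma (1 + θ) * w₁ t / (t ^ θ * C₁)| ≤ εs ∧
        |θ - Real.log (|w t - w 0|) / Real.log t| ≤ ε₃ := by
  intro εs hεs ε₃ hε₃ t ht0 htlt
  obtain ⟨hεs0, hεs1⟩ := hεs
  obtain ⟨hε₃0, hε₃1⟩ := hε₃
  obtain ⟨hθ0, hθ1⟩ := hθ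
  have hC₁' : 0 < |C₁| := abs_pos.mpr hC₁
  set G := Real.Gamma (1 + θ) with hGdef
  have hGpos : 0 < G := Real.Gamma_pos_of_pos (by linarith)
  have hG1 : G ≤ 1 := by
    have h := Real.convexOn_Gamma.2 (mem_Ioi.mpr one_pos) (mem_Ioi.mpr two_pos)
      (by linarith : (0:ℝ) ≤ 1 - θ) hθ0.le (by ring)
    simp only [smul_eq_mul, Real.Gamma_one, Real.Gamma_two] at h
    have he : (1 - θ) * (1:ℝ) + θ * 2 = 1 + θ := by ring
    rw [he] at h
    rw [hGdef]
    linarith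
  have hGm_pos : 0 < GammaMin := gammaMin_pos
  have hGm_le : GammaMin ≤ G := gammaMin_le (by linarith)
  -- extract the five bounds on t
  have h1 : t < Ts := lt_of_lt_of_le htlt (min_le_left _ _)
  have hrest := lt_of_lt_of_le htlt (min_le_right _ _)
  have h2 : t < (|C₁| * GammaMin) ^ (2/ε₃) := lt_of_lt_of_le hrest (min_le_left _ _)
  have hrest2 := lt_of_lt_of_le hrest (min_le_right _ _)
  have h3 : t < (GammaMin / |C₁|) ^ (2/ε₃) := lt_of_lt_of_le hrest2 (min_le_left _ _)
  have hrest3 := lt_of_lt_of_le hrest2 (min_le_right _ _)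
  have h4 : t < (1 - εs) ^ (2/ε₃) := lt_of_lt_of_le hrest3 (min_le_left _ _)
  have h5 : t < (|C₁| * εs / C₂) ^ (1/θs) := lt_of_lt_of_le hrest3 (min_le_right _ _)
  have htθ : 0 < t ^ θ := Real.rpow_pos_of_pos ht0 θ
  -- Part 1
  have hw1bd : |w₁ t| ≤ C₂ * t ^ θs * t ^ θ := by
    have h := hbd t ⟨ht0, h1.le⟩
    rw [Real.rpow_neg ht0.le, abs_mul, abs_of_pos (inv_pos.mpr htθ)] at h
    have := mul_le_mul_of_nonneg_left h htθ.le
    calc |w₁ t| = t ^ θ * ((t ^ θ)⁻¹ * |w₁ t|) := by field_simp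
      _ ≤ t ^ θ * (C₂ * t ^ θs) := this
      _ = C₂ * t ^ θs * t ^ θ := by ring
  have htθs : t ^ θs < |C₁| * εs / C₂ := by
    have hbase : 0 < |C₁| * εs / C₂ := by positivity
    have h := Real.rpow_lt_rpow ht0.le h5 hθs
    rwa [← Real.rpow_mul hbase.le, one_div, inv_mul_cancel₀ hθs.ne', Real.rpow_one] at h
  have hCts : C₂ * t ^ θs ≤ εs * |C₁| := by
    rw [lt_div_iff₀ hC₂] at htθs
    nlinarith
  have hpart1 : |G * w₁ t / (t ^ θ * C₁)| ≤ εs := by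
    rw [abs_div, abs_mul, abs_mul, abs_of_pos hGpos, abs_of_pos htθ,
      div_le_iff₀ (by positivity)]
    have hg : G * |w₁ t| ≤ |w₁ t| := by
      nlinarith [abs_nonneg (w₁ t)]
    have htθsnn : (0:ℝ) ≤ t ^ θ := htθ.le
    calc G * |w₁ t| ≤ |w₁ t| := hg
      _ ≤ C₂ * t ^ θs * t ^ θ := hw1bd
      _ ≤ εs * |C₁| * t ^ θ := by nlinarith
      _ = εs * (t ^ θ * |C₁|) := by ring
  refine ⟨hpart1, ?_⟩
  -- Part 2
  set r := G * w₁ t / (t ^ θ * C₁) with hrdef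
  have hr : |r| ≤ εs := hpart1
  obtain ⟨hrl, hru⟩ := abs_le.mp hr
  have h1r : 0 < 1 + r := by linarith
  have h1me : 0 < 1 - εs := by linarith
  have hfac : w t - w 0 = C₁ * t ^ θ / G * (1 + r) := by
    rw [hrep t ⟨ht0.le, h1.le⟩, hrdef]
    field_simp
  have habs2 : |w t - w 0| = |C₁| * t ^ θ / G * (1 + r) := by
    rw [hfac, abs_mul, abs_div, abs_mul, abs_of_pos htθ, abs_of_pos hGpos,
      abs_of_pos h1r]
  have hlog : Real.log (|w t - w 0|) =
      Real.log |C₁| + θ * Real.log t - Real.log G + Real.log (1 + r) := by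
    rw [habs2, Real.log_mul (ne_of_gt (div_pos (mul_pos hC₁' htθ) hGpos)) h1r.ne',
      Real.log_div (ne_of_gt (mul_pos hC₁' htθ)) hGpos.ne',
      Real.log_mul hC₁'.ne' htθ.ne', Real.log_rpow ht0]
  have ht1 : t < 1 := lt_trans h4 (Real.rpow_lt_one h1me.le (by linarith) (by positivity))
  have hlogt : Real.log t < 0 := Real.log_neg ht0 ht1
  -- key log inequalities
  have key : ∀ b : ℝ, 0 < b → t < b ^ (2/ε₃) → ε₃/2 * Real.log t < Real.log b := by
    intro b hb h
    have h' := Real.log_lt_log ht0 h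
    rw [Real.log_rpow hb] at h'
    have hmul := mul_lt_mul_of_pos_left h' (by positivity : (0:ℝ) < ε₃/2)
    calc ε₃/2 * Real.log t < ε₃/2 * (2/ε₃ * Real.log b) := hmul
      _ = Real.log b := by field_simp
  have kA : ε₃/2 * Real.log t < Real.log |C₁| + Real.log GammaMin := by
    have h := key _ (mul_pos hC₁' hGm_pos) h2
    rwa [Real.log_mul hC₁'.ne' hGm_pos.ne'] at h
  have kB : ε₃/2 * Real.log t < Real.log GammaMin - Real.log |C₁| := by
    have h := key _ (div_pos hGm_pos hC₁') h3
    rwa [Real.log_div hGm_pos.ne' hC₁'.ne'] at h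
  have kC : ε₃/2 * Real.log t < Real.log (1 - εs) := key _ h1me h4
  have hlogGm_le : Real.log GammaMin ≤ Real.log G := Real.log_le_log hGm_pos hGm_le
  have hlogG_nonpos : Real.log G ≤ 0 := Real.log_nonpos hGpos.le hG1
  have hlogGm_nonpos : Real.log GammaMin ≤ 0 :=
    Real.log_nonpos hGm_pos.le (hGm_le.trans hG1)
  -- bound on |log |C₁| - log G|
  have hD : |Real.log |C₁| - Real.log G| ≤ ε₃/2 * (-Real.log t) :=
    abs_le.mpr ⟨by linarith, by linarith⟩
  -- bound on |log (1+r)|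
  have hlr_lb : Real.log (1 - εs) ≤ Real.log (1 + r) :=
    Real.log_le_log h1me (by linarith)
  have hlr_ub : Real.log (1 + r) ≤ -Real.log (1 - εs) := by
    have hle : 1 + r ≤ (1 - εs)⁻¹ := by
      have h' : 1 + r ≤ 1/(1 - εs) := (le_div_iff₀ h1me).mpr (by nlinarith [sq_nonneg εs, mul_le_mul_of_nonneg_right (show 1 + r ≤ 1 + εs by linarith) h1me.le])
      rwa [one_div] at h'
    calc Real.log (1 + r) ≤ Real.log ((1 - εs)⁻¹) := Real.log_le_log h1r hle
      _ = -Real.log (1 - εs) := Real.log_inv _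
  have hR : |Real.log (1 + r)| ≤ ε₃/2 * (-Real.log t) :=
    abs_le.mpr ⟨by linarith, by linarith⟩
  -- conclude
  have hE : θ - Real.log (|w t - w 0|) / Real.log t
      = -((Real.log |C₁| - Real.log G + Real.log (1 + r)) / Real.log t) := by
    rw [hlog]
    field_simp [hlogt.ne]
    ring
  rw [hE, abs_neg, abs_div, abs_of_neg hlogt, div_le_iff₀ (by linarith : 0 < -Real.log t)]
  have habs3 := abs_add_le (Real.log |C₁| - Real.log G) (Real.log (1 + r))
  have : |Real.log |C₁| - Real.log G + Real.log (1 + r)| ≤ ε₃ * (-Real.log t) := by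
    linarith
  linarith
end

section
/- Let T* ∈ (0,1), γ* ∈ (0,1), γ₃, γ₄ ∈ (0,1), and let k ∈ C^{γ₃}([0,T*]) and f ∈ C^{γ₄}([0,T*]) with k(0) ≠ 0 and f(0) ≠ 0. Then for any λ, ε₆* ∈ (0,1) and each ε* ∈ (0, 1−λ^{ε₆*}), the estimate |log_λ |G_f(λt)/G_f(t)|| < ε₆* holds for every t ∈ (0, t₄*], where t₄* = min{T*, (C₇*)^{1/γ̄}}, γ̄ = min{γ₃, γ₄}, and C₇* = ε* |f(0)| |k(0)| Γ(1+x*) / (3[|f(0)| ⟨k⟩^{(γ₃)}_{[0,T*]} + ⟨f⟩^{(γ₄)}_{[0,T*]} ‖k‖_{C([0,T*])}]); in particular G_f(t) ≠ 0 for such t. -/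
/-!
`G_f(t)` averages `k(t - zt) f(zt)` against the weight `(1 - z)^(γ* - 1)` of total mass `1/γ*`.
Hölder continuity at `0` keeps the integrand within `D t^γ̄` of `k(0) f(0)`, where
`D = |f(0)| ⟨k⟩ + ⟨f⟩ ‖k‖`; for `t ≤ t₄*` this is at most `ε*/3 · |k(0) f(0)|` because
`Γ(1 + x*) ≤ Γ(1) = 1`. Hence `G_f(t)` and `G_f(λt)` both lie within `ε*/3` of `k(0) f(0)/γ*`, so
their ratio lies in `[1 - ε*, (1 - ε*)⁻¹] ⊂ (λ^ε₆*, λ^(-ε₆*))`.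
-/

open Set MeasureTheory

/-- Hölder seminorm `⟨f⟩^{(α)}_{[0,T]}` of `f` on `[0,T]`. -/
noncomputable def holderSemi (f : ℝ → ℝ) (T α : ℝ) : ℝ :=
  sSup {y : ℝ | ∃ s t : ℝ, 0 ≤ s ∧ s < t ∧ t ≤ T ∧ y = |f t - f s| / (t - s) ^ α}

/-- Sup norm `‖f‖_{C([0,T])}`. -/
noncomputable def supNorm (f : ℝ → ℝ) (T : ℝ) : ℝ :=
  sSup ((fun t => |f t|) '' Set.Icc 0 T)

/-- `G_f(t) = ∫₀¹ (1-z)^{γ*-1} k(t - zt) f(zt) dz`. -/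
noncomputable def Gbig (γs : ℝ) (k f : ℝ → ℝ) (t : ℝ) : ℝ :=
  ∫ z in (0:ℝ)..1, (1 - z) ^ (γs - 1) * k (t - z * t) * f (z * t)

lemma holderSemi_nonneg (f : ℝ → ℝ) (T α : ℝ) : 0 ≤ holderSemi f T α :=
  Real.sSup_nonneg fun _ ⟨_, _, _, hst, _, hy⟩ =>
    hy ▸ div_nonneg (abs_nonneg _) (Real.rpow_nonneg (sub_nonneg.2 hst.le) _)

lemma supNorm_nonneg (f : ℝ → ℝ) (T : ℝ) : 0 ≤ supNorm f T :=
  Real.sSup_nonneg <| by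
    rintro _ ⟨t, -, rfl⟩
    exact abs_nonneg _

lemma abs_le_supNorm {f : ℝ → ℝ} {T x : ℝ} (hf : ContinuousOn f (Icc 0 T)) (hx : x ∈ Icc 0 T) :
    |f x| ≤ supNorm f T :=
  le_csSup (isCompact_Icc.image_of_continuousOn hf.abs).bddAbove ⟨x, hx, rfl⟩

lemma GammaMin_nonneg : 0 ≤ GammaMin :=
  Real.sInf_nonneg <| by
    rintro _ ⟨x, hx, rfl⟩
    exact (Real.Gamma_pos_of_pos hx).le

lemma GammaMin_le_one : GammaMin ≤ 1 := by
  have hbdd : BddBelow (Real.Gamma '' Ioi 0) :=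
    ⟨0, by rintro _ ⟨x, hx, rfl⟩; exact (Real.Gamma_pos_of_pos hx).le⟩
  simpa [GammaMin, Real.Gamma_one] using csInf_le hbdd ⟨1, mem_Ioi.2 one_pos, rfl⟩

section AbelWeight

variable {γ : ℝ}

lemma intervalIntegrable_one_sub_rpow (hγ : 0 < γ) :
    IntervalIntegrable (fun z : ℝ => (1 - z) ^ (γ - 1)) volume 0 1 := by
  simpa using ((intervalIntegral.intervalIntegrable_rpow' (a := 0) (b := 1) (r := γ - 1)
    (by linarith)).comp_sub_left 1).symm

lemma integral_one_sub_rpow (hγ : 0 < γ) : ∫ z in (0:ℝ)..1, (1 - z) ^ (γ - 1) = 1 / γ := by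
  rw [intervalIntegral.integral_comp_sub_left (fun x : ℝ => x ^ (γ - 1)) 1, sub_self, sub_zero,
    integral_rpow (Or.inl (by linarith)), sub_add_cancel, Real.one_rpow, Real.zero_rpow hγ.ne',
    sub_zero]

lemma abs_integral_one_sub_rpow_mul_sub_le {g : ℝ → ℝ} {c δ : ℝ} (hγ : 0 < γ)
    (hg : ContinuousOn g (Icc 0 1)) (hgc : ∀ z ∈ Icc (0:ℝ) 1, |g z - c| ≤ δ) :
    |(∫ z in (0:ℝ)..1, (1 - z) ^ (γ - 1) * g z) - c / γ| ≤ δ / γ := by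
  have hw := intervalIntegrable_one_sub_rpow hγ
  rw [← uIcc_of_le zero_le_one] at hg
  have hcont : ContinuousOn (fun z => g z - c) (uIcc 0 1) := hg.sub continuousOn_const
  have hw_nonneg : ∀ z ∈ Icc (0:ℝ) 1, 0 ≤ (1 - z) ^ (γ - 1) :=
    fun z hz => Real.rpow_nonneg (sub_nonneg.2 hz.2) _
  have hsplit : (∫ z in (0:ℝ)..1, (1 - z) ^ (γ - 1) * g z) - c / γ =
      ∫ z in (0:ℝ)..1, (1 - z) ^ (γ - 1) * (g z - c) := by
    simp only [mul_sub]
    rw [intervalIntegral.integral_sub (hw.mul_continuousOn hg) (hw.mul_const c),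
      intervalIntegral.integral_mul_const, integral_one_sub_rpow hγ, one_div_mul_eq_div]
  rw [hsplit]
  calc |∫ z in (0:ℝ)..1, (1 - z) ^ (γ - 1) * (g z - c)|
      ≤ ∫ z in (0:ℝ)..1, |(1 - z) ^ (γ - 1) * (g z - c)| :=
        intervalIntegral.abs_integral_le_integral_abs zero_le_one
    _ ≤ ∫ z in (0:ℝ)..1, (1 - z) ^ (γ - 1) * δ := by
        refine intervalIntegral.integral_mono_on zero_le_one (hw.mul_continuousOn hcont).abs
          (hw.mul_const δ) fun z hz => ?_
        rw [abs_mul, abs_of_nonneg (hw_nonneg z hz)]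
        exact mul_le_mul_of_nonneg_left (hgc z hz) (hw_nonneg z hz)
    _ = δ / γ := by rw [intervalIntegral.integral_mul_const, integral_one_sub_rpow hγ]; ring

end AbelWeight

lemma abs_sub_zero_le_of_holder {g : ℝ → ℝ} {T C γ γ' a s : ℝ}
    (hg : ∀ s t : ℝ, 0 ≤ s → s ≤ t → t ≤ T → |g t - g s| ≤ C * (t - s) ^ γ)
    (hC : 0 ≤ C) (hγ' : 0 ≤ γ') (hγ'γ : γ' ≤ γ) (ha : a ∈ Icc 0 s) (hsT : s ≤ T) (hs1 : s ≤ 1) :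
    |g a - g 0| ≤ C * s ^ γ' := by
  have hs0 : 0 ≤ s := ha.1.trans ha.2
  calc |g a - g 0| ≤ C * (a - 0) ^ γ := hg 0 a le_rfl ha.1 (ha.2.trans hsT)
    _ ≤ C * s ^ γ := by
        rw [sub_zero]
        exact mul_le_mul_of_nonneg_left (Real.rpow_le_rpow ha.1 ha.2 (hγ'.trans hγ'γ)) hC
    _ ≤ C * s ^ γ' :=
        mul_le_mul_of_nonneg_left (Real.rpow_le_rpow_of_exponent_ge' hs0 hs1 hγ' hγ'γ) hC

lemma abs_mul_sub_mul_le (a b c d : ℝ) : |a * b - c * d| ≤ |a - c| * |d| + |a| * |b - d| :=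
  calc |a * b - c * d| = |(a - c) * d + a * (b - d)| := by ring_nf
    _ ≤ |a - c| * |d| + |a| * |b - d| := by
        rw [← abs_mul, ← abs_mul]; exact abs_add_le _ _

lemma abs_logb_lt_of_mem_Ioo {b r ε : ℝ} (hb0 : 0 < b) (hb1 : b < 1)
    (hr : r ∈ Ioo (b ^ ε) (b ^ (-ε))) : |Real.logb b r| < ε := by
  have hr0 : 0 < r := (Real.rpow_pos_of_pos hb0 ε).trans hr.1
  rw [abs_lt, Real.lt_logb_iff_rpow_lt_of_base_lt_one hb0 hb1 hr0,
    Real.logb_lt_iff_lt_rpow_of_base_lt_one hb0 hb1 hr0]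
  exact hr.symm

lemma abs_div_mem_Icc_of_abs_sub_le {A x y ε : ℝ} (hA : A ≠ 0) (hε : ε < 1)
    (hx : |x - A| ≤ ε / 3 * |A|) (hy : |y - A| ≤ ε / 3 * |A|) :
    |y / x| ∈ Icc (1 - ε) (1 - ε)⁻¹ := by
  have hA0 : 0 < |A| := abs_pos.2 hA
  have hε0 : 0 ≤ ε := by
    have := (abs_nonneg _).trans hx
    nlinarith
  have hxl : (1 - ε / 3) * |A| ≤ |x| := by linarith [abs_sub_abs_le_abs_sub A x, abs_sub_comm x A]
  have hxu : |x| ≤ (1 + ε / 3) * |A| := by linarith [abs_sub_abs_le_abs_sub x A]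
  have hyl : (1 - ε / 3) * |A| ≤ |y| := by linarith [abs_sub_abs_le_abs_sub A y, abs_sub_comm y A]
  have hyu : |y| ≤ (1 + ε / 3) * |A| := by linarith [abs_sub_abs_le_abs_sub y A]
  have hx0 : 0 < |x| := by nlinarith
  have h1ε : 0 < 1 - ε := by linarith
  rw [abs_div]
  constructor
  · rw [le_div_iff₀ hx0]
    nlinarith
  · rw [div_le_iff₀ hx0, ← div_eq_inv_mul, le_div_iff₀ h1ε]
    nlinarith

lemma ne_zero_and_abs_logb_abs_div_lt {A x y b ε δ : ℝ} (hA : A ≠ 0) (hb0 : 0 < b) (hb1 : b < 1)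
    (hε : ε < 1 - b ^ δ) (hx : |x - A| ≤ ε / 3 * |A|) (hy : |y - A| ≤ ε / 3 * |A|) :
    x ≠ 0 ∧ |Real.logb b (|y / x|)| < δ := by
  have hbδ := Real.rpow_pos_of_pos hb0 δ
  have hratio := abs_div_mem_Icc_of_abs_sub_le hA (by linarith) hx hy
  refine ⟨fun hx0 => ?_, abs_logb_lt_of_mem_Ioo hb0 hb1 ⟨by linarith [hratio.1], ?_⟩⟩
  · rw [hx0, div_zero, abs_zero] at hratio
    linarith [hratio.1]
  · rw [Real.rpow_neg hb0.le]
    exact hratio.2.trans_lt (inv_strictAnti₀ hbδ (by linarith))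

lemma mul_div_mul_self_le {a b c : ℝ} (ha : 0 ≤ a) (hb : 0 ≤ b) (hc : 0 ≤ c) :
    a * (b / (c * a)) ≤ b / c := by
  rcases ha.eq_or_lt with rfl | ha
  · rw [zero_mul]; positivity
  · exact le_of_eq (by field_simp)

section Kernel

variable {T γ₃ γ₄ : ℝ} {k f : ℝ → ℝ}

lemma abs_kernel_mul_sub_le (hγ₃ : 0 ≤ γ₃) (hγ₄ : 0 ≤ γ₄) (hkc : ContinuousOn k (Icc 0 T))
    (hkh : ∀ s t : ℝ, 0 ≤ s → s ≤ t → t ≤ T → |k t - k s| ≤ holderSemi k T γ₃ * (t - s) ^ γ₃)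
    (hfh : ∀ s t : ℝ, 0 ≤ s → s ≤ t → t ≤ T → |f t - f s| ≤ holderSemi f T γ₄ * (t - s) ^ γ₄)
    {s z : ℝ} (hs : s ∈ Icc 0 T) (hT : T ≤ 1) (hz : z ∈ Icc (0:ℝ) 1) :
    |k (s - z * s) * f (z * s) - k 0 * f 0| ≤
      (|f 0| * holderSemi k T γ₃ + holderSemi f T γ₄ * supNorm k T) * s ^ min γ₃ γ₄ := by
  have hzs : z * s ∈ Icc 0 s := ⟨mul_nonneg hz.1 hs.1, mul_le_of_le_one_left hs.1 hz.2⟩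
  have hszs : s - z * s ∈ Icc 0 s := ⟨sub_nonneg.2 hzs.2, sub_le_self _ hzs.1⟩
  have hs1 : s ≤ 1 := hs.2.trans hT
  have hγ : 0 ≤ min γ₃ γ₄ := le_min hγ₃ hγ₄
  have hk := abs_sub_zero_le_of_holder hkh (holderSemi_nonneg k T γ₃) hγ (min_le_left _ _) hszs
    hs.2 hs1
  have hf := abs_sub_zero_le_of_holder hfh (holderSemi_nonneg f T γ₄) hγ (min_le_right _ _) hzs
    hs.2 hs1
  have hkb : |k (s - z * s)| ≤ supNorm k T := abs_le_supNorm hkc ⟨hszs.1, hszs.2.trans hs.2⟩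
  calc |k (s - z * s) * f (z * s) - k 0 * f 0|
      ≤ |k (s - z * s) - k 0| * |f 0| + |k (s - z * s)| * |f (z * s) - f 0| :=
        abs_mul_sub_mul_le _ _ _ _
    _ ≤ holderSemi k T γ₃ * s ^ min γ₃ γ₄ * |f 0| +
          supNorm k T * (holderSemi f T γ₄ * s ^ min γ₃ γ₄) := by
        gcongr
        exact (abs_nonneg _).trans hkb
    _ = _ := by ring

lemma abs_Gbig_sub_le {γs : ℝ} (hγs : 0 < γs) (hγ₃ : 0 ≤ γ₃) (hγ₄ : 0 ≤ γ₄)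
    (hkc : ContinuousOn k (Icc 0 T))
    (hkh : ∀ s t : ℝ, 0 ≤ s → s ≤ t → t ≤ T → |k t - k s| ≤ holderSemi k T γ₃ * (t - s) ^ γ₃)
    (hfc : ContinuousOn f (Icc 0 T))
    (hfh : ∀ s t : ℝ, 0 ≤ s → s ≤ t → t ≤ T → |f t - f s| ≤ holderSemi f T γ₄ * (t - s) ^ γ₄)
    {s : ℝ} (hs : s ∈ Icc 0 T) (hT : T ≤ 1) :
    |Gbig γs k f s - k 0 * f 0 / γs| ≤
      (|f 0| * holderSemi k T γ₃ + holderSemi f T γ₄ * supNorm k T) * s ^ min γ₃ γ₄ / γs := by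
  have hmaps : MapsTo (fun z : ℝ => z * s) (Icc 0 1) (Icc 0 T) := fun z hz =>
    ⟨mul_nonneg hz.1 hs.1, (mul_le_of_le_one_left hs.1 hz.2).trans hs.2⟩
  have hmaps' : MapsTo (fun z : ℝ => s - z * s) (Icc 0 1) (Icc 0 T) := fun z hz =>
    ⟨sub_nonneg.2 (mul_le_of_le_one_left hs.1 hz.2),
      (sub_le_self _ (mul_nonneg hz.1 hs.1)).trans hs.2⟩
  have hcont : ContinuousOn (fun z => k (s - z * s) * f (z * s)) (Icc 0 1) :=
    (hkc.comp (by fun_prop) hmaps').mul (hfc.comp (by fun_prop) hmaps)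
  simp only [Gbig, mul_assoc]
  exact abs_integral_one_sub_rpow_mul_sub_le hγs hcont fun z hz =>
    abs_kernel_mul_sub_le hγ₃ hγ₄ hkc hkh hfh hs hT hz


lemma abs_Gbig_sub_le_of_rpow_le {γs ε : ℝ} (hγs : 0 < γs) (hγ₃ : 0 ≤ γ₃) (hγ₄ : 0 ≤ γ₄)
    (hkc : ContinuousOn k (Icc 0 T))
    (hkh : ∀ s t : ℝ, 0 ≤ s → s ≤ t → t ≤ T → |k t - k s| ≤ holderSemi k T γ₃ * (t - s) ^ γ₃)
    (hfc : ContinuousOn f (Icc 0 T))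
    (hfh : ∀ s t : ℝ, 0 ≤ s → s ≤ t → t ≤ T → |f t - f s| ≤ holderSemi f T γ₄ * (t - s) ^ γ₄)
    {s : ℝ} (hs : s ∈ Icc 0 T) (hT : T ≤ 1) (hε : 0 ≤ ε)
    (hsC : s ^ min γ₃ γ₄ ≤ ε * |f 0| * |k 0| * GammaMin /
      (3 * (|f 0| * holderSemi k T γ₃ + holderSemi f T γ₄ * supNorm k T))) :
    |Gbig γs k f s - k 0 * f 0 / γs| ≤ ε / 3 * |k 0 * f 0 / γs| := by
  set D := |f 0| * holderSemi k T γ₃ + holderSemi f T γ₄ * supNorm k T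
  have hD : 0 ≤ D := add_nonneg (mul_nonneg (abs_nonneg _) (holderSemi_nonneg _ _ _))
    (mul_nonneg (holderSemi_nonneg _ _ _) (supNorm_nonneg _ _))
  have hX : 0 ≤ ε * |f 0| * |k 0| := by positivity
  calc |Gbig γs k f s - k 0 * f 0 / γs| ≤ D * s ^ min γ₃ γ₄ / γs :=
        abs_Gbig_sub_le hγs hγ₃ hγ₄ hkc hkh hfc hfh hs hT
    _ ≤ D * (ε * |f 0| * |k 0| * GammaMin / (3 * D)) / γs := by gcongr
    _ ≤ ε * |f 0| * |k 0| * GammaMin / 3 / γs := by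
        gcongr
        exact mul_div_mul_self_le hD (mul_nonneg hX GammaMin_nonneg) zero_le_three
    _ ≤ ε * |f 0| * |k 0| / 3 / γs := by
        gcongr ?_ / 3 / γs
        exact mul_le_of_le_one_right hX GammaMin_le_one
    _ = ε / 3 * |k 0 * f 0 / γs| := by
        rw [abs_div, abs_mul, abs_of_pos hγs]; ring

end Kernel

theorem stmt_14 (Ts γs γ₃ γ₄ : ℝ) (k f : ℝ → ℝ)
    (hTs : Ts ∈ Set.Ioo (0:ℝ) 1) (hγs : γs ∈ Set.Ioo (0:ℝ) 1)
    (hγ₃ : γ₃ ∈ Set.Ioo (0:ℝ) 1) (hγ₄ : γ₄ ∈ Set.Ioo (0:ℝ) 1)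
    (hkc : ContinuousOn k (Set.Icc 0 Ts))
    (hkh : ∀ s t : ℝ, 0 ≤ s → s ≤ t → t ≤ Ts →
      |k t - k s| ≤ holderSemi k Ts γ₃ * (t - s) ^ γ₃)
    (hfc : ContinuousOn f (Set.Icc 0 Ts))
    (hfh : ∀ s t : ℝ, 0 ≤ s → s ≤ t → t ≤ Ts →
      |f t - f s| ≤ holderSemi f Ts γ₄ * (t - s) ^ γ₄)
    (hk0 : k 0 ≠ 0) (hf0 : f 0 ≠ 0) :
    ∀ lam ∈ Set.Ioo (0:ℝ) 1, ∀ ε₆ ∈ Set.Ioo (0:ℝ) 1,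
      ∀ εs ∈ Set.Ioo (0:ℝ) (1 - lam ^ ε₆),
        ∀ t ∈ Set.Ioc (0:ℝ)
          (min Ts ((εs * |f 0| * |k 0| * GammaMin /
              (3 * (|f 0| * holderSemi k Ts γ₃ +
                holderSemi f Ts γ₄ * supNorm k Ts))) ^ (1 / min γ₃ γ₄))),
          Gbig γs k f t ≠ 0 ∧
          |Real.logb lam (|Gbig γs k f (lam * t) / Gbig γs k f t|)| < ε₆ := by
  intro lam hlam ε₆ _ εs hεs t ht
  set C := εs * |f 0| * |k 0| * GammaMin /
    (3 * (|f 0| * holderSemi k Ts γ₃ + holderSemi f Ts γ₄ * supNorm k Ts))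
  have hC : 0 ≤ C := div_nonneg (mul_nonneg (by have := hεs.1; positivity) GammaMin_nonneg)
    (mul_nonneg zero_le_three (add_nonneg (mul_nonneg (abs_nonneg _) (holderSemi_nonneg _ _ _))
      (mul_nonneg (holderSemi_nonneg _ _ _) (supNorm_nonneg _ _))))
  have hγ : 0 < min γ₃ γ₄ := lt_min hγ₃.1 hγ₄.1
  have htC : t ^ min γ₃ γ₄ ≤ C :=
    (Real.le_rpow_inv_iff_of_pos ht.1.le hC hγ).1
      (one_div (min γ₃ γ₄) ▸ ht.2.trans (min_le_right _ _))
  have hclose : ∀ s ∈ Icc 0 t, |Gbig γs k f s - k 0 * f 0 / γs| ≤ εs / 3 * |k 0 * f 0 / γs| :=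
    fun s hs => abs_Gbig_sub_le_of_rpow_le hγs.1 hγ₃.1.le hγ₄.1.le hkc hkh hfc hfh
      ⟨hs.1, hs.2.trans (ht.2.trans (min_le_left _ _))⟩ hTs.2.le hεs.1.le
      ((Real.rpow_le_rpow hs.1 hs.2 hγ.le).trans htC)
  exact ne_zero_and_abs_logb_abs_div_lt (div_ne_zero (mul_ne_zero hk0 hf0) hγs.1.ne')
    hlam.1 hlam.2 hεs.2 (hclose t ⟨ht.1.le, le_rfl⟩)
    (hclose (lam * t) ⟨mul_nonneg hlam.1.le ht.1.le, mul_le_of_le_one_left ht.1.le hlam.2.le⟩)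
end

section
/- Let T* ∈ (0,1), γ* ∈ (0,1), γ₃, γ₄ ∈ (0,1), and let k ∈ C^{γ₃}([0,T*]) and f ∈ C^{γ₄}([0,T*]) with k(0) ≠ 0 and f(0) ≠ 0. Let λ, ε₆* ∈ (0,1), ε* ∈ (0, 1−λ^{ε₆*}), and set γ̄ = min{γ₃, γ₄} and C₇* = ε* |f(0)| |k(0)| Γ(1+x*) / (3[|f(0)| ⟨k⟩^{(γ₃)}_{[0,T*]} + ⟨f⟩^{(γ₄)}_{[0,T*]} ‖k‖_{C([0,T*])}]). Then for every t ∈ [0, min{T*, (C₇*)^{1/γ̄}}], |G_f(t)| ≥ (|k(0) f(0)| / (3γ*)) · (3 − ε*). -/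
set_option maxHeartbeats 1000000


open Set MeasureTheory

theorem stmt_15 (Ts γs γ₃ γ₄ : ℝ) (k f : ℝ → ℝ)
    (hTs : Ts ∈ Set.Ioo (0:ℝ) 1) (hγs : γs ∈ Set.Ioo (0:ℝ) 1)
    (hγ₃ : γ₃ ∈ Set.Ioo (0:ℝ) 1) (hγ₄ : γ₄ ∈ Set.Ioo (0:ℝ) 1)
    (hkc : ContinuousOn k (Set.Icc 0 Ts))
    (hkh : ∀ s t : ℝ, 0 ≤ s → s ≤ t → t ≤ Ts →
      |k t - k s| ≤ holderSemi k Ts γ₃ * (t - s) ^ γ₃)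
    (hfc : ContinuousOn f (Set.Icc 0 Ts))
    (hfh : ∀ s t : ℝ, 0 ≤ s → s ≤ t → t ≤ Ts →
      |f t - f s| ≤ holderSemi f Ts γ₄ * (t - s) ^ γ₄)
    (hk0 : k 0 ≠ 0) (hf0 : f 0 ≠ 0)
    (lam ε₆ εs : ℝ) (hlam : lam ∈ Set.Ioo (0:ℝ) 1) (hε₆ : ε₆ ∈ Set.Ioo (0:ℝ) 1)
    (hεs : εs ∈ Set.Ioo (0:ℝ) (1 - lam ^ ε₆)) :
    ∀ t ∈ Set.Icc (0:ℝ)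
      (min Ts ((εs * |f 0| * |k 0| * GammaMin /
          (3 * (|f 0| * holderSemi k Ts γ₃ +
            holderSemi f Ts γ₄ * supNorm k Ts))) ^ (1 / min γ₃ γ₄))),
      |k 0 * f 0| / (3 * γs) * (3 - εs) ≤ |Gbig γs k f t| := by
  obtain ⟨hTs0, hTs1⟩ := hTs
  obtain ⟨hγs0, hγs1⟩ := hγs
  obtain ⟨hγ₃0, hγ₃1⟩ := hγ₃
  obtain ⟨hγ₄0, hγ₄1⟩ := hγ₄
  obtain ⟨hεs0, hεs1⟩ := hεs
  set Hk := holderSemi k Ts γ₃ with hHk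
  set Hf := holderSemi f Ts γ₄ with hHf
  set K := supNorm k Ts with hKdef
  set γb := min γ₃ γ₄ with hγb
  have hγb0 : 0 < γb := lt_min hγ₃0 hγ₄0
  -- nonnegativity of the Hölder seminorms
  have hHk0 : 0 ≤ Hk := by
    have h := hkh 0 Ts le_rfl hTs0.le le_rfl
    have hp : (0:ℝ) < (Ts - 0) ^ γ₃ := Real.rpow_pos_of_pos (by linarith) _
    nlinarith [abs_nonneg (k Ts - k 0)]
  have hHf0 : 0 ≤ Hf := by
    have h := hfh 0 Ts le_rfl hTs0.le le_rfl
    have hp : (0:ℝ) < (Ts - 0) ^ γ₄ := Real.rpow_pos_of_pos (by linarith) _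
    nlinarith [abs_nonneg (f Ts - f 0)]
  -- sup norm bounds
  have hKb : ∀ x ∈ Set.Icc (0:ℝ) Ts, |k x| ≤ K := by
    intro x hx
    exact le_csSup (isCompact_Icc.bddAbove_image hkc.abs) ⟨x, hx, rfl⟩
  have hK0 : 0 ≤ K := le_trans (abs_nonneg _) (hKb 0 ⟨le_rfl, hTs0.le⟩)
  -- Gamma min facts
  have hmemG : Real.Gamma 1 ∈ Real.Gamma '' Set.Ioi (0:ℝ) :=
    ⟨1, Set.mem_Ioi.mpr one_pos, rfl⟩
  have hbddG : BddBelow (Real.Gamma '' Set.Ioi (0:ℝ)) := by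
    refine ⟨0, ?_⟩
    rintro y ⟨x, hx, rfl⟩
    exact (Real.Gamma_pos_of_pos hx).le
  have hGm0 : 0 ≤ GammaMin := by
    apply le_csInf ⟨Real.Gamma 1, hmemG⟩
    rintro y ⟨x, hx, rfl⟩
    exact (Real.Gamma_pos_of_pos hx).le
  have hGm1 : GammaMin ≤ 1 := by
    have h : GammaMin ≤ Real.Gamma 1 := csInf_le hbddG hmemG
    rwa [Real.Gamma_one] at h
  set A := |f 0| * Hk + Hf * K with hA
  have hA0 : 0 ≤ A := by positivity
  set c := k 0 * f 0 with hc
  have hc0 : 0 < |c| := abs_pos.mpr (mul_ne_zero hk0 hf0)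
  intro t ht
  obtain ⟨ht0, ht1⟩ := ht
  have htTs : t ≤ Ts := le_trans ht1 (min_le_left _ _)
  have ht1' : t ≤ 1 := le_trans htTs hTs1.le
  have htR : t ≤ (εs * |f 0| * |k 0| * GammaMin / (3 * A)) ^ (1 / γb) :=
    le_trans ht1 (min_le_right _ _)
  -- the weight function
  set w : ℝ → ℝ := fun z => (1 - z) ^ (γs - 1) with hw
  have hw_int : IntervalIntegrable w volume 0 1 := by
    have h := (intervalIntegral.intervalIntegrable_rpow' (show (-1:ℝ) < γs - 1 by linarith)
      (a := 0) (b := 1)).comp_sub_left 1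
    simpa [hw] using h.symm
  have hw_nonneg : ∀ z ∈ Set.Icc (0:ℝ) 1, 0 ≤ w z := by
    intro z hz
    exact Real.rpow_nonneg (by linarith [hz.2]) _
  have hwI : (∫ z in (0:ℝ)..1, w z) = 1 / γs := by
    have h := intervalIntegral.integral_comp_sub_left (fun u : ℝ => u ^ (γs - 1)) 1
      (a := 0) (b := 1)
    simp only [hw]
    rw [show (∫ z in (0:ℝ)..1, (1 - z) ^ (γs - 1)) =
      ∫ x in (1-(1:ℝ))..(1-0), x ^ (γs - 1) from h]
    rw [show (1:ℝ) - 1 = 0 by norm_num, show (1:ℝ) - 0 = 1 by norm_num]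
    rw [integral_rpow (Or.inl (by linarith))]
    rw [show γs - 1 + 1 = γs by ring, Real.one_rpow, Real.zero_rpow (ne_of_gt hγs0)]
    ring
  -- the continuous part
  set g : ℝ → ℝ := fun z => k (t - z * t) * f (z * t) with hg
  have hmaps1 : ∀ z ∈ Set.Icc (0:ℝ) 1, t - z * t ∈ Set.Icc (0:ℝ) Ts := by
    intro z hz
    constructor
    · nlinarith [hz.1, hz.2]
    · nlinarith [hz.1]
  have hmaps2 : ∀ z ∈ Set.Icc (0:ℝ) 1, z * t ∈ Set.Icc (0:ℝ) Ts := by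
    intro z hz
    constructor
    · exact mul_nonneg hz.1 ht0
    · nlinarith [hz.1, hz.2]
  have hgc : ContinuousOn g (Set.uIcc (0:ℝ) 1) := by
    rw [Set.uIcc_of_le (zero_le_one)]
    apply ContinuousOn.mul
    · exact hkc.comp (by fun_prop) (fun z hz => hmaps1 z hz)
    · exact hfc.comp (by fun_prop) (fun z hz => hmaps2 z hz)
  have hwg_int : IntervalIntegrable (fun z => w z * g z) volume 0 1 :=
    hw_int.mul_continuousOn hgc
  have hG : Gbig γs k f t = ∫ z in (0:ℝ)..1, w z * g z := by
    unfold Gbig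
    simp only [hw, hg, mul_assoc]
  -- power bound helper
  have hpow : ∀ a γ : ℝ, 0 ≤ a → a ≤ t → γb ≤ γ → a ^ γ ≤ t ^ γb := by
    intro a γ ha hat hγ
    have h1 : a ^ γ ≤ t ^ γ := Real.rpow_le_rpow ha hat (le_trans hγb0.le hγ)
    rcases eq_or_lt_of_le ht0 with h | h
    · have ha0 : a = 0 := le_antisymm (by rw [← h] at hat; exact hat) ha
      rw [ha0, Real.zero_rpow (ne_of_gt (lt_of_lt_of_le hγb0 hγ))]
      exact Real.rpow_nonneg ht0 _
    · exact le_trans h1 (Real.rpow_le_rpow_of_exponent_ge h ht1' hγ)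
  set B := A * t ^ γb with hB
  have htγb0 : 0 ≤ t ^ γb := Real.rpow_nonneg ht0 _
  have hB0 : 0 ≤ B := mul_nonneg hA0 htγb0
  -- pointwise bound
  have hptw : ∀ z ∈ Set.Icc (0:ℝ) 1, |g z - c| ≤ B := by
    intro z hz
    have h1 := hmaps1 z hz
    have h2 := hmaps2 z hz
    have hkb := hkh 0 (t - z * t) le_rfl h1.1 h1.2
    have hfb := hfh 0 (z * t) le_rfl h2.1 h2.2
    have hkK := hKb _ h1
    have hdecomp : g z - c = (k (t - z * t) - k 0) * f 0 + k (t - z * t) * (f (z * t) - f 0) := by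
      simp only [hg, hc]; ring
    have e1 : (0:ℝ) ≤ t - z * t - 0 := by linarith [h1.1]
    have e2 : t - z * t - 0 ≤ t := by nlinarith [hz.1, ht0]
    have e3 : (0:ℝ) ≤ z * t - 0 := by linarith [h2.1]
    have e4 : z * t - 0 ≤ t := by nlinarith [hz.1, hz.2, ht0]
    have hp1 : (t - z * t - 0) ^ γ₃ ≤ t ^ γb := hpow _ _ e1 e2 (min_le_left _ _)
    have hp2 : (z * t - 0) ^ γ₄ ≤ t ^ γb := hpow _ _ e3 e4 (min_le_right _ _)
    calc |g z - c| ≤ |k (t - z * t) - k 0| * |f 0| + |k (t - z * t)| * |f (z * t) - f 0| := by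
            rw [hdecomp]
            refine le_trans (abs_add_le _ _) ?_
            rw [abs_mul, abs_mul]
      _ ≤ (Hk * t ^ γb) * |f 0| + K * (Hf * t ^ γb) := by
            apply add_le_add
            · apply mul_le_mul_of_nonneg_right _ (abs_nonneg _)
              exact le_trans hkb (mul_le_mul_of_nonneg_left hp1 hHk0)
            · apply mul_le_mul hkK (le_trans hfb (mul_le_mul_of_nonneg_left hp2 hHf0))
                (abs_nonneg _) hK0
      _ = B := by rw [hB, hA]; ring
  -- integral estimate
  have hwgc_int : IntervalIntegrable (fun z => w z * (g z - c)) volume 0 1 :=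
    hw_int.mul_continuousOn (hgc.sub continuousOn_const)
  have hsplit : (∫ z in (0:ℝ)..1, w z * (g z - c)) =
      (∫ z in (0:ℝ)..1, w z * g z) - c / γs := by
    have h1 : (∫ z in (0:ℝ)..1, w z * (g z - c)) =
        (∫ z in (0:ℝ)..1, w z * g z) - ∫ z in (0:ℝ)..1, w z * c := by
      rw [← intervalIntegral.integral_sub hwg_int (hw_int.mul_const c)]
      congr 1; ext z; ring
    rw [h1, intervalIntegral.integral_mul_const, hwI]
    ring
  have hbound : |(∫ z in (0:ℝ)..1, w z * g z) - c / γs| ≤ B / γs := by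
    rw [← hsplit]
    refine le_trans (intervalIntegral.abs_integral_le_integral_abs zero_le_one) ?_
    have hle : (∫ z in (0:ℝ)..1, |w z * (g z - c)|) ≤ ∫ z in (0:ℝ)..1, w z * B := by
      apply intervalIntegral.integral_mono_on zero_le_one hwgc_int.abs
        (hw_int.mul_const B)
      intro z hz
      rw [abs_mul, abs_of_nonneg (hw_nonneg z hz)]
      exact mul_le_mul_of_nonneg_left (hptw z hz) (hw_nonneg z hz)
    refine le_trans hle ?_
    rw [intervalIntegral.integral_mul_const, hwI]
    ring_nf
    exact le_rfl
  -- bound B ≤ εs * |c| / 3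
  have hBle : B ≤ εs * |c| / 3 := by
    rcases eq_or_lt_of_le hA0 with hAz | hApos
    · rw [hB, ← hAz, zero_mul]
      positivity
    · have hC0 : 0 ≤ εs * |f 0| * |k 0| * GammaMin / (3 * A) := by positivity
      have htγ : t ^ γb ≤ εs * |f 0| * |k 0| * GammaMin / (3 * A) := by
        have h := Real.rpow_le_rpow ht0 htR hγb0.le
        rwa [← Real.rpow_mul hC0, one_div_mul_cancel (ne_of_gt hγb0),
          Real.rpow_one] at h
      have h1 : B ≤ A * (εs * |f 0| * |k 0| * GammaMin / (3 * A)) :=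
        mul_le_mul_of_nonneg_left htγ hApos.le
      have h2 : A * (εs * |f 0| * |k 0| * GammaMin / (3 * A)) =
          εs * |f 0| * |k 0| * GammaMin / 3 := by
        field_simp [hApos.ne']
      rw [h2] at h1
      refine le_trans h1 ?_
      have hceq : |c| = |k 0| * |f 0| := abs_mul _ _
      have hmul : εs * |f 0| * |k 0| * GammaMin ≤ εs * |f 0| * |k 0| * 1 :=
        mul_le_mul_of_nonneg_left hGm1 (by positivity)
      rw [hceq]
      linarith
  -- conclusion
  rw [hG]
  have habs2 : |c / γs| - |∫ z in (0:ℝ)..1, w z * g z| ≤ B / γs := by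
    refine le_trans ?_ hbound
    rw [abs_sub_comm]
    exact abs_sub_abs_le_abs_sub _ _
  have hcd : |c / γs| = |c| / γs := by
    rw [abs_div, abs_of_pos hγs0]
  have hBd : B / γs ≤ εs * |c| / (3 * γs) := by
    rw [show εs * |c| / (3 * γs) = (εs * |c| / 3) / γs by ring]
    exact (div_le_div_iff_of_pos_right hγs0).mpr hBle
  have hid : |c| / (3 * γs) * (3 - εs) = |c| / γs - εs * |c| / (3 * γs) := by
    field_simp
  rw [hcd] at habs2
  rw [show |k 0 * f 0| = |c| from rfl, hid]
  linarith
end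

section
/- Let T > 0, α ∈ (0,1], H > 0, and let h : [0,T] → ℝ satisfy the Hölder bound |h(t) − h(s)| ≤ H (t−s)^α for all 0 ≤ s ≤ t ≤ T, with h(0) ≠ 0. Then for any λ, ε' ∈ (0,1) and any ε ∈ (0, 1 − λ^{ε'}), one has h(t) ≠ 0 and |log_λ |h(λt)/h(t)|| ≤ ε' for every t ∈ (0, min{T, (ε |h(0)| / (3H))^{1/α}}]. -/
open Set

set_option maxHeartbeats 1000000 in
theorem stmt_17 (T α H : ℝ) (h : ℝ → ℝ)
    (hT : 0 < T) (hα : α ∈ Set.Ioc (0:ℝ) 1) (hH : 0 < H)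
    (hhol : ∀ s t : ℝ, 0 ≤ s → s ≤ t → t ≤ T → |h t - h s| ≤ H * (t - s) ^ α)
    (h0 : h 0 ≠ 0) :
    ∀ lam ∈ Set.Ioo (0:ℝ) 1, ∀ ε' ∈ Set.Ioo (0:ℝ) 1,
      ∀ ε ∈ Set.Ioo (0:ℝ) (1 - lam ^ ε'),
        ∀ t ∈ Set.Ioc (0:ℝ) (min T ((ε * |h 0| / (3 * H)) ^ (1 / α))),
          h t ≠ 0 ∧ |Real.logb lam (|h (lam * t) / h t|)| ≤ ε' := by
  rintro lam ⟨hlam0, hlam1⟩ ε' ⟨hε'0, hε'1⟩ ε ⟨hε0, hεub⟩ t ⟨ht0, htle⟩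
  obtain ⟨hα0, hα1⟩ := hα
  have hA : 0 < |h 0| := abs_pos.mpr h0
  set A := |h 0| with hAdef
  have hlampow : (0:ℝ) < lam ^ ε' := Real.rpow_pos_of_pos hlam0 ε'
  have hlampow1 : lam ^ ε' < 1 - ε := by linarith
  have hε1 : ε < 1 := by linarith
  have htT : t ≤ T := le_trans htle (min_le_left _ _)
  have hc : (0:ℝ) < ε * A / (3 * H) := by positivity
  have hta : t ≤ (ε * A / (3 * H)) ^ (1/α) := le_trans htle (min_le_right _ _)
  have htα : t ^ α ≤ ε * A / (3 * H) := by
    calc t ^ α ≤ ((ε * A / (3*H)) ^ (1/α)) ^ α :=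
          Real.rpow_le_rpow ht0.le hta hα0.le
      _ = ε * A / (3 * H) := by
          rw [← Real.rpow_mul hc.le, one_div, inv_mul_cancel₀ hα0.ne', Real.rpow_one]
  have hlt : lam * t ≤ t := by nlinarith [mul_pos ht0 (sub_pos.mpr hlam1)]
  have hlt0 : 0 ≤ lam * t := by positivity
  have hbt : |h t - h 0| ≤ ε * A / 3 := by
    have := hhol 0 t le_rfl ht0.le htT
    simp only [sub_zero] at this
    calc |h t - h 0| ≤ H * t ^ α := this
      _ ≤ H * (ε * A / (3 * H)) := mul_le_mul_of_nonneg_left htα hH.le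
      _ = ε * A / 3 := by field_simp
  have hblt : |h (lam * t) - h 0| ≤ ε * A / 3 := by
    have := hhol 0 (lam * t) le_rfl hlt0 (le_trans hlt htT)
    simp only [sub_zero] at this
    have hmono : (lam * t) ^ α ≤ t ^ α := Real.rpow_le_rpow hlt0 hlt hα0.le
    calc |h (lam * t) - h 0| ≤ H * (lam * t) ^ α := this
      _ ≤ H * (ε * A / (3 * H)) :=
            mul_le_mul_of_nonneg_left (le_trans hmono htα) hH.le
      _ = ε * A / 3 := by field_simp
  -- bounds on |h t| and |h (lam*t)|
  have habs : ∀ x : ℝ, |h x - h 0| ≤ ε * A / 3 →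
      A - ε * A / 3 ≤ |h x| ∧ |h x| ≤ A + ε * A / 3 := by
    intro x hx
    constructor
    · have : A - |h x| ≤ |h x - h 0| := by
        have := abs_sub_abs_le_abs_sub (h 0) (h x)
        rw [abs_sub_comm] at this
        linarith
      linarith
    · have : |h x| - A ≤ |h x - h 0| := by
        have := abs_sub_abs_le_abs_sub (h x) (h 0)
        linarith
      linarith
  obtain ⟨ht_lo, ht_hi⟩ := habs t hbt
  obtain ⟨hl_lo, hl_hi⟩ := habs (lam * t) hblt
  have hApos : 0 < A - ε * A / 3 := by nlinarith
  have hhtpos : 0 < |h t| := lt_of_lt_of_le hApos ht_lo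
  have hhlpos : 0 < |h (lam * t)| := lt_of_lt_of_le hApos hl_lo
  have hhtne : h t ≠ 0 := fun hzz => by simp [hzz] at hhtpos
  refine ⟨hhtne, ?_⟩
  -- ratio bounds
  have key : (1 - ε) * (A + ε * A / 3) ≤ A - ε * A / 3 := by nlinarith [mul_pos hε0 hA]
  have h1ε : (0:ℝ) ≤ 1 - ε := by linarith
  have hlow : (1 - ε) * |h t| ≤ |h (lam * t)| :=
    le_trans (le_trans (mul_le_mul_of_nonneg_left ht_hi h1ε) key) hl_lo
  have hup : (1 - ε) * |h (lam * t)| ≤ |h t| :=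
    le_trans (le_trans (mul_le_mul_of_nonneg_left hl_hi h1ε) key) ht_lo
  set r : ℝ := |h (lam * t) / h t| with hrdef
  have hr : r = |h (lam * t)| / |h t| := abs_div _ _
  have hrpos : 0 < r := by rw [hr]; positivity
  have hr_lo : 1 - ε ≤ r := by
    rw [hr, le_div_iff₀ hhtpos]; linarith
  have hr_hi : r * (1 - ε) ≤ 1 := by
    rw [hr, div_mul_eq_mul_div, div_le_one hhtpos, mul_comm]; exact hup
  have hloglam : Real.log lam < 0 := Real.log_neg hlam0 hlam1
  have hlogr_lo : ε' * Real.log lam ≤ Real.log r := by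
    have h1 : Real.log (lam ^ ε') ≤ Real.log r :=
      Real.log_le_log hlampow (by linarith)
    rwa [Real.log_rpow hlam0] at h1
  have hlogr_hi : Real.log r ≤ -(ε' * Real.log lam) := by
    have h2 : r ≤ (lam ^ ε')⁻¹ := by
      rw [← one_div, le_div_iff₀ hlampow]
      calc r * lam ^ ε' ≤ r * (1 - ε) :=
            mul_le_mul_of_nonneg_left hlampow1.le hrpos.le
        _ ≤ 1 := hr_hi
    have h3 : Real.log r ≤ Real.log ((lam ^ ε')⁻¹) := Real.log_le_log hrpos h2
    rwa [Real.log_inv, Real.log_rpow hlam0] at h3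
  -- conclude
  have hlogabs : |Real.log r| ≤ ε' * -Real.log lam := by
    rw [abs_le]; constructor <;> linarith
  have : |Real.logb lam r| = |Real.log r| / |Real.log lam| := by
    rw [Real.logb, abs_div]
  rw [this, div_le_iff₀ (abs_pos.mpr hloglam.ne)]
  rw [abs_of_neg hloglam]
  linarith
end
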